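/- arXiv:1910.03647 — 4 statements merged into one kernel-verified Lean document; each statement's English description precedes it below -/
import Mathlib

section
/- Let G be a finite group with a normal abelian subgroup N such that G/N is cyclic. Then the commutator subgroup [G,G] is contained in N and equals the set {ρ(τ)·τ⁻¹ : τ ∈ N}, where ρ is the automorphism of N induced by conjugation by any lift of a generator of G/N. -/
/-!
Since `N` is abelian and normal, `τ ↦ ⁅g, τ⁆ = ρ(τ) τ⁻¹` is a homomorphism on `N`, so its image
`S` is a subgroup of `N` made of commutators. Every element of `G` is `g ^ k * σ` with `σ ∈ N`;
this makes `S` normal, and in `G ⧸ S` the image of `g` commutes with the image of the abelian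
group `N`, so `G ⧸ S` is abelian and `[G, G] ≤ S`.
-/

open scoped commutatorElement

namespace Subgroup

variable {G : Type*} [Group G] (N : Subgroup G) [N.Normal]

theorem exists_eq_zpow_mul_of_forall_mem_zpowers {g : G}
    (hg : ∀ x : G ⧸ N, x ∈ zpowers (QuotientGroup.mk g : G ⧸ N)) (x : G) :
    ∃ k : ℤ, ∃ σ ∈ N, x = g ^ k * σ := by
  obtain ⟨k, hk⟩ := hg x
  refine ⟨k, (g ^ k)⁻¹ * x, QuotientGroup.eq.mp ?_, (mul_inv_cancel_left _ _).symm⟩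
  simpa using hk

theorem commutatorElement_mem_of_mem (g : G) {τ : G} (hτ : τ ∈ N) : ⁅g, τ⁆ ∈ N :=
  commutator_le_right ⊤ N (commutator_mem_commutator (mem_top g) hτ)

variable [IsMulCommutative N]

def commutatorHom (g : G) : N →* G :=
  MonoidHom.mk' (fun τ => ⁅g, (τ : G)⁆) fun σ τ => by
    rw [coe_mul, commutatorElement_mul_right_eq_mul_conj, mul_assoc _ (σ : G),
      setLike_mul_comm σ.2 (commutatorElement_mem_of_mem N g τ.2), ← mul_assoc,
      mul_inv_cancel_right]

variable {N}

@[simp]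
theorem commutatorHom_apply (g : G) (τ : N) : commutatorHom N g τ = ⁅g, (τ : G)⁆ := rfl

variable (g : G)

theorem range_commutatorHom_le : (commutatorHom N g).range ≤ N := by
  rintro _ ⟨τ, rfl⟩
  exact commutatorElement_mem_of_mem N g τ.2

theorem range_commutatorHom_le_commutator : (commutatorHom N g).range ≤ _root_.commutator G := by
  rintro _ ⟨τ, rfl⟩
  exact commutator_mem_commutator (mem_top g) (mem_top τ)

variable {g}

/-- Conjugation by `g ^ k * σ` acts on `⁅g, τ⁆ ∈ N` as conjugation by `g ^ k`, which commutes
with `g`. -/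
theorem normal_range_commutatorHom
    (hg : ∀ x : G ⧸ N, x ∈ zpowers (QuotientGroup.mk g : G ⧸ N)) :
    (commutatorHom N g).range.Normal := by
  refine ⟨?_⟩
  rintro _ ⟨τ, rfl⟩ x
  obtain ⟨k, σ, hσ, rfl⟩ := exists_eq_zpow_mul_of_forall_mem_zpowers N hg x
  have hcomm : σ * ⁅g, (τ : G)⁆ = ⁅g, (τ : G)⁆ * σ :=
    setLike_mul_comm hσ (commutatorElement_mem_of_mem N g τ.2)
  refine ⟨⟨g ^ k * τ * (g ^ k)⁻¹, Normal.conj_mem ‹_› _ τ.2 _⟩, ?_⟩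
  rw [commutatorHom_apply]
  calc ⁅g, g ^ k * τ * (g ^ k)⁻¹⁆ = g ^ k * ⁅g, (τ : G)⁆ * (g ^ k)⁻¹ := by
        rw [conjugate_commutatorElement, ← (Commute.self_zpow g k).eq, mul_inv_cancel_right]
    _ = g ^ k * σ * ⁅g, (τ : G)⁆ * (g ^ k * σ)⁻¹ := by
        rw [mul_assoc _ σ, hcomm]; group

theorem commutator_le_range_commutatorHom
    (hg : ∀ x : G ⧸ N, x ∈ zpowers (QuotientGroup.mk g : G ⧸ N)) :
    _root_.commutator G ≤ (commutatorHom N g).range := by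
  have := normal_range_commutatorHom hg
  let q := QuotientGroup.mk' (commutatorHom N g).range
  have hgN : ∀ τ ∈ N, Commute (q g) (q τ) := fun τ hτ => by
    rw [← commutatorElement_eq_one_iff_commute, ← map_commutatorElement, ← MonoidHom.mem_ker,
      QuotientGroup.ker_mk']
    exact ⟨⟨τ, hτ⟩, rfl⟩
  have hNN : ∀ σ ∈ N, ∀ τ ∈ N, Commute (q σ) (q τ) := fun σ hσ τ hτ =>
    Commute.map (setLike_mul_comm hσ hτ) q
  rw [_root_.commutator_def, commutator_le]
  intro a _ b _
  obtain ⟨i, σ, hσ, rfl⟩ := exists_eq_zpow_mul_of_forall_mem_zpowers N hg a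
  obtain ⟨j, τ, hτ, rfl⟩ := exists_eq_zpow_mul_of_forall_mem_zpowers N hg b
  rw [← QuotientGroup.ker_mk' (commutatorHom N g).range, MonoidHom.mem_ker, map_commutatorElement,
    commutatorElement_eq_one_iff_commute, map_mul, map_mul, map_zpow, map_zpow]
  exact (((Commute.refl (q g)).zpow_zpow i j).mul_left ((hgN σ hσ).symm.zpow_right j)).mul_right
    (((hgN τ hτ).zpow_left i).mul_left (hNN σ hσ τ hτ))

end Subgroup

theorem stmt0_general {G : Type*} [Group G] (N : Subgroup G) (hN : N.Normal)
    (habelian : ∀ a b : G, a ∈ N → b ∈ N → a * b = b * a)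
    (g : G)
    (hgen : ∀ x : G ⧸ N, x ∈ Subgroup.zpowers (QuotientGroup.mk g : G ⧸ N)) :
    commutator G ≤ N ∧
      (commutator G : Set G) = {x : G | ∃ τ ∈ N, x = (g * τ * g⁻¹) * τ⁻¹} := by
  have : IsMulCommutative N := ⟨⟨fun a b => Subtype.ext (habelian a b a.2 b.2)⟩⟩
  have hrange : commutator G = (Subgroup.commutatorHom N g).range :=
    le_antisymm (Subgroup.commutator_le_range_commutatorHom hgen)
      (Subgroup.range_commutatorHom_le_commutator g)
  refine ⟨hrange ▸ Subgroup.range_commutatorHom_le g, ?_⟩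
  ext x
  simp [hrange, commutatorElement_def, eq_comm]

/-- Let `G` be a finite group with a normal abelian subgroup `N` such that `G/N` is cyclic,
generated by the class of `g`. Then `[G,G] ⊆ N` and `[G,G] = {ρ(τ)τ⁻¹ : τ ∈ N}` where
`ρ` is conjugation by `g`. -/
theorem stmt0 {G : Type*} [Group G] [Finite G] (N : Subgroup G) (hN : N.Normal)
    (habelian : ∀ a b : G, a ∈ N → b ∈ N → a * b = b * a)
    (g : G)
    (hgen : ∀ x : G ⧸ N, x ∈ Subgroup.zpowers (QuotientGroup.mk g : G ⧸ N)) :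
    commutator G ≤ N ∧
      (commutator G : Set G) = {x : G | ∃ τ ∈ N, x = (g * τ * g⁻¹) * τ⁻¹} :=
  stmt0_general N hN habelian g hgen
end

section
/- Let G be a finite group with normal abelian subgroup N such that G/N is cyclic. Then the restriction map Hom(G, ℚ/ℤ) → Hom(N, ℚ/ℤ)^{G/N} (homomorphisms invariant under the conjugation action of G/N) is surjective. -/
/-!
Let `M ≤ N` be the kernel of `χN`, viewed as a subgroup of `G`. Invariance of `χN` makes `M`
normal in `G` and puts every commutator `g n g⁻¹ n⁻¹` (`n ∈ N`) into `M`, so `N ⧸ M` is central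
in `G ⧸ M`. A group that is cyclic modulo a central subgroup is abelian, hence `G ⧸ M` is abelian,
and `χN` is a character of its subgroup `N ⧸ M`. Since `ℚ/ℤ` is divisible, hence an injective
`ℤ`-module, this character extends to `G ⧸ M`.
-/

namespace MonoidHom

local notation "ℚ⧸ℤ" => Multiplicative (AddCircle (1 : ℚ))

theorem exists_comp_eq_of_injective {A B : Type*} [CommGroup A] [CommGroup B] (f : A →* B)
    (hf : Function.Injective f) (χ : A →* ℚ⧸ℤ) : ∃ ψ : B →* ℚ⧸ℤ, ψ.comp f = χ := by
  obtain ⟨ψ, hψ⟩ := (Module.Baer.of_divisible (AddCircle (1 : ℚ))).extension_property_addMonoidHom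
    f.toAdditive hf (toAdditiveLeft χ)
  exact ⟨toAdditiveLeft.symm ψ, toAdditiveLeft.injective hψ⟩

theorem exists_comp_eq_of_ker_le {N A : Type*} [Group N] [CommGroup A] (f : N →* A)
    (χ : N →* ℚ⧸ℤ) (h : f.ker ≤ χ.ker) : ∃ ψ : A →* ℚ⧸ℤ, ψ.comp f = χ := by
  let χ' : f.range →* ℚ⧸ℤ :=
    f.rangeRestrict.liftOfSurjective f.rangeRestrict_surjective ⟨χ, by rwa [ker_rangeRestrict]⟩
  obtain ⟨ψ, hψ⟩ := exists_comp_eq_of_injective f.range.subtype f.range.subtype_injective χ'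
  refine ⟨ψ, ?_⟩
  rw [← f.subtype_comp_rangeRestrict, ← comp_assoc, hψ]
  exact f.rangeRestrict.liftOfRightInverse_comp _ _ _

end MonoidHom

section InvariantCharacter

variable {G A : Type*} [Group G] [Group A] {N : Subgroup G} (hN : N.Normal) {χ : N →* A}

theorem normal_map_subtype_ker_of_conj_invariant
    (hχ : ∀ (g n : G) (hn : n ∈ N), χ ⟨g * n * g⁻¹, hN.conj_mem n hn g⟩ = χ ⟨n, hn⟩) :
    (χ.ker.map N.subtype).Normal :=
  ⟨fun _ ⟨⟨n, hn⟩, hker, hx⟩ g ↦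
    hx ▸ ⟨⟨g * n * g⁻¹, hN.conj_mem n hn g⟩, (hχ g n hn).trans hker, rfl⟩⟩

theorem commutator_mem_map_subtype_ker_of_conj_invariant
    (hχ : ∀ (g n : G) (hn : n ∈ N), χ ⟨g * n * g⁻¹, hN.conj_mem n hn g⟩ = χ ⟨n, hn⟩)
    (g : G) {n : G} (hn : n ∈ N) : g * n * g⁻¹ * n⁻¹ ∈ χ.ker.map N.subtype := by
  let c : N := ⟨g * n * g⁻¹, hN.conj_mem n hn g⟩ * (⟨n, hn⟩ : N)⁻¹
  refine ⟨c, ?_, rfl⟩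
  change χ c = 1
  rw [map_mul, map_inv, hχ g n hn, mul_inv_cancel]

end InvariantCharacter

theorem QuotientGroup.isMulCommutative_of_isCyclic_of_commutator_mem {G : Type*} [Group G]
    {M N : Subgroup G} [M.Normal] [N.Normal] [IsCyclic (G ⧸ N)] (hMN : M ≤ N)
    (hcomm : ∀ (g : G) {n : G}, n ∈ N → g * n * g⁻¹ * n⁻¹ ∈ M) : IsMulCommutative (G ⧸ M) := by
  refine (QuotientGroup.map M N (MonoidHom.id G) hMN).isMulCommutative_of_isCyclic_of_ker_le_center
    fun x hx ↦ ?_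
  induction x using QuotientGroup.induction_on with
  | H n =>
    have hn : n ∈ N := (QuotientGroup.eq_one_iff n).1 hx
    refine Subgroup.mem_center_iff.2 fun y ↦ ?_
    induction y using QuotientGroup.induction_on with
    | H g =>
      refine (QuotientGroup.eq_iff_div_mem).2 ?_
      simpa [div_eq_mul_inv, mul_assoc] using hcomm g hn

theorem stmt1_general {G : Type*} [Group G] (N : Subgroup G) (hN : N.Normal)
    (hcyc : IsCyclic (G ⧸ N))
    (χN : N →* Multiplicative (AddCircle (1 : ℚ)))
    (hinv : ∀ (g n : G) (hn : n ∈ N),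
      χN ⟨g * n * g⁻¹, hN.conj_mem n hn g⟩ = χN ⟨n, hn⟩) :
    ∃ χ : G →* Multiplicative (AddCircle (1 : ℚ)),
      ∀ (n : G) (hn : n ∈ N), χ n = χN ⟨n, hn⟩ := by
  set M := χN.ker.map N.subtype
  have hM : M.Normal := normal_map_subtype_ker_of_conj_invariant hN hinv
  have hcomm : IsMulCommutative (G ⧸ M) := QuotientGroup.isMulCommutative_of_isCyclic_of_commutator_mem (Subgroup.map_subtype_le _)
    (commutator_mem_map_subtype_ker_of_conj_invariant hN hinv)
  let f : N →* G ⧸ M := (QuotientGroup.mk' M).comp N.subtype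
  have hker : f.ker ≤ χN.ker := by
    intro n hn
    obtain ⟨m, hm, hmn⟩ := (QuotientGroup.eq_one_iff (n : G)).1 hn
    rwa [Subtype.ext hmn] at hm
  open scoped IsMulCommutative in
  obtain ⟨ψ, hψ⟩ := MonoidHom.exists_comp_eq_of_ker_le f χN hker
  exact ⟨ψ.comp (QuotientGroup.mk' M), fun n hn ↦ DFunLike.congr_fun hψ ⟨n, hn⟩⟩

/-- Let `G` be a finite group with normal abelian subgroup `N` such that `G/N` is cyclic.
Then the restriction map `Hom(G, ℚ/ℤ) → Hom(N, ℚ/ℤ)^{G/N}` is surjective: every character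
of `N` with values in `ℚ/ℤ` that is invariant under conjugation by `G` extends to `G`. -/
theorem stmt1 {G : Type*} [Group G] [Finite G] (N : Subgroup G) (hN : N.Normal)
    (habelian : ∀ a b : G, a ∈ N → b ∈ N → a * b = b * a)
    (hcyc : IsCyclic (G ⧸ N))
    (χN : N →* Multiplicative (AddCircle (1 : ℚ)))
    (hinv : ∀ (g n : G) (hn : n ∈ N),
      χN ⟨g * n * g⁻¹, hN.conj_mem n hn g⟩ = χN ⟨n, hn⟩) :
    ∃ χ : G →* Multiplicative (AddCircle (1 : ℚ)),
      ∀ (n : G) (hn : n ∈ N), χ n = χN ⟨n, hn⟩ :=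
  stmt1_general N hN hcyc χN hinv
end

section
/- Let G be a finite group, N ◁ G abelian with G/N cyclic. Define [G/N, N] := { ∏_{ρ ∈ G/N} ρ(τ_ρ)·τ_ρ⁻¹ : τ_ρ ∈ N }, the subgroup of N generated by elements ρ(τ)τ⁻¹ for ρ ∈ G/N, τ ∈ N (conjugation action). Then [G/N, N] = [G,G]. -/
/-!
The generated subgroup is `⁅⊤, N⁆`, since `gτg⁻¹τ⁻¹ = ⁅g, τ⁆`. Modulo `⁅⊤, N⁆` the image of `N`
is central, and a group whose quotient by a central subgroup is cyclic is abelian; hence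
`G ⧸ ⁅⊤, N⁆` is abelian, i.e. `⁅⊤, ⊤⁆ ≤ ⁅⊤, N⁆`.
-/

namespace Subgroup

variable {G : Type*} [Group G]

theorem closure_conj_mul_inv_eq_commutator_top_left (N : Subgroup G) :
    closure {x : G | ∃ g τ : G, τ ∈ N ∧ x = (g * τ * g⁻¹) * τ⁻¹} = ⁅(⊤ : Subgroup G), N⁆ := by
  rw [commutator_def]
  congr 1
  ext x
  simp only [Set.mem_ofPred_eq, mem_top, true_and, commutatorElement_def]
  exact ⟨fun ⟨g, τ, hτ, hx⟩ ↦ ⟨g, τ, hτ, hx.symm⟩, fun ⟨g, τ, hτ, hx⟩ ↦ ⟨g, τ, hτ, hx.symm⟩⟩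

theorem map_mk'_le_center_quotient_commutator_top_left (N : Subgroup G) [N.Normal] :
    N.map (QuotientGroup.mk' ⁅(⊤ : Subgroup G), N⁆) ≤ center (G ⧸ ⁅(⊤ : Subgroup G), N⁆) := by
  rw [← commutator_top_left_eq_bot_iff_le_center,
    ← map_top_of_surjective _ (QuotientGroup.mk'_surjective _), ← map_commutator,
    QuotientGroup.map_mk'_self]

theorem commutator_top_left_eq_commutator_of_isCyclic_quotient (N : Subgroup G) [N.Normal]
    [IsCyclic (G ⧸ N)] : ⁅(⊤ : Subgroup G), N⁆ = _root_.commutator G := by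
  refine le_antisymm (commutator_mono le_rfl le_top) ?_
  refine Normal.quotient_commutative_iff_commutator_le.mp <|
    MonoidHom.isMulCommutative_of_isCyclic_of_ker_le_center
      (QuotientGroup.map _ N (MonoidHom.id G) (commutator_le_right ⊤ N)) ?_
  exact (QuotientGroup.ker_map ..).le.trans (map_mk'_le_center_quotient_commutator_top_left N)

end Subgroup

theorem stmt3_general {G : Type*} [Group G] (N : Subgroup G) (hN : N.Normal)
    (hcyc : IsCyclic (G ⧸ N)) :
    Subgroup.closure {x : G | ∃ g τ : G, τ ∈ N ∧ x = (g * τ * g⁻¹) * τ⁻¹}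
      = commutator G := by
  rw [Subgroup.closure_conj_mul_inv_eq_commutator_top_left,
    Subgroup.commutator_top_left_eq_commutator_of_isCyclic_quotient]

/-- Let `G` be a finite group, `N ◁ G` abelian with `G/N` cyclic. The subgroup
`[G/N, N]` of `N` generated by the elements `ρ(τ)τ⁻¹ = gτg⁻¹τ⁻¹` (conjugation action of
`G/N` on `N`) equals the commutator subgroup `[G,G]`. -/
theorem stmt3 {G : Type*} [Group G] [Finite G] (N : Subgroup G) (hN : N.Normal)
    (habelian : ∀ a b : G, a ∈ N → b ∈ N → a * b = b * a)
    (hcyc : IsCyclic (G ⧸ N)) :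
    Subgroup.closure {x : G | ∃ g τ : G, τ ∈ N ∧ x = (g * τ * g⁻¹) * τ⁻¹}
      = commutator G :=
  stmt3_general N hN hcyc
end

section
/- Let k_v be a nonarchimedean local field with ring of integers O_v and residue field of size q, let L/k_v be an unramified extension, and suppose the norm form equation N_{L/k_v}(z) = 0 has a solution z₀ with coordinates in O_v whose reduction mod the maximal ideal is a smooth point of the reduced hypersurface. Then L has a degree-1 factor over k_v, i.e. L contains k_v as a direct factor when L is an étale algebra; equivalently, if L is a field, L = k_v. -/
/-!
Since `L` is a field, the norm form has no nontrivial zero, so `z₀ = 0`. Along the `i`-th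
coordinate axis the norm form is homogeneous of degree `n = [L : K]`, i.e. `N (t eᵢ) = tⁿ N eᵢ`.
The partial derivative `∂ᵢN (0)` is the derivative at `0` of this restriction, which vanishes
unless `n = 1`; smoothness at `z₀ = 0` therefore forces `n = 1`.
-/

open MvPolynomial

lemma IsDiscreteValuationRing.infinite (R : Type*) [CommRing R] [IsDomain R]
    [IsDiscreteValuationRing R] : Infinite R := by
  rw [← not_finite_iff_infinite]
  intro
  exact IsDiscreteValuationRing.not_isField R (Finite.isField_of_domain R)

namespace MvPolynomial

variable {σ R : Type*} [CommRing R] [DecidableEq σ]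

lemma eval_aeval_piSingle_X (i : σ) (t : R) (q : MvPolynomial σ R) :
    (aeval (Pi.single i Polynomial.X) q).eval t = eval (Pi.single i t) q := by
  rw [aeval_def, polynomial_eval_eval₂]
  congr 1
  · ext; simp
  · ext j; by_cases hj : j = i <;> simp [hj]

lemma derivative_aeval_piSingle_X_eval_zero (i : σ) (q : MvPolynomial σ R) :
    (aeval (Pi.single i Polynomial.X) q).derivative.eval 0 = eval 0 (pderiv i q) := by
  induction q using MvPolynomial.induction_on with
  | C a => simp
  | add p q hp hq => simp [hp, hq]
  | mul_X p j h =>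
    have h0 := eval_aeval_piSingle_X i 0 p
    rw [Pi.single_zero] at h0
    by_cases hj : j = i
    · subst hj; simp [Derivation.leibniz, h, h0]
    · simp [Derivation.leibniz, hj]

theorem eval_zero_pderiv_eq_zero_of_eval_piSingle [IsDomain R] [Infinite R]
    {q : MvPolynomial σ R} {i : σ} {n : ℕ} (hn : n ≠ 1)
    (hq : ∀ t : R, eval (Pi.single i t) q = t ^ n * eval (Pi.single i 1) q) :
    eval 0 (pderiv i q) = 0 := by
  have hline : aeval (Pi.single i Polynomial.X) q =
      Polynomial.C (eval (Pi.single i 1) q) * Polynomial.X ^ n :=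
    Polynomial.funext fun t => by
      rw [eval_aeval_piSingle_X, hq, Polynomial.eval_mul, Polynomial.eval_C, Polynomial.eval_pow,
        Polynomial.eval_X, mul_comm]
  rw [← derivative_aeval_piSingle_X_eval_zero, hline]
  rcases n with _ | _ | n
  · simp
  · exact absurd rfl hn
  · simp

end MvPolynomial

section NormForm

open Module

variable {O K L ι : Type*} [CommRing O] [Field K] [Algebra O K] [Field L] [Algebra K L]
  [Algebra O L] [Fintype ι] {v : ι → L} {N : MvPolynomial ι O}

theorem eq_zero_of_eval_normForm_eq_zero [FiniteDimensional K L] (hv : LinearIndependent O v)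
    (hN : ∀ c : ι → O, algebraMap O K (eval c N) = Algebra.norm K (∑ i, c i • v i))
    {z : ι → O} (hz : eval z N = 0) : z = 0 := by
  have hnorm : Algebra.norm K (∑ i, z i • v i) = 0 := by rw [← hN, hz, map_zero]
  funext i
  exact Fintype.linearIndependent_iff.mp hv z (Algebra.norm_eq_zero_iff.mp hnorm) i

theorem eval_piSingle_normForm [IsScalarTower O K L] [DecidableEq ι] [FaithfulSMul O K]
    (hN : ∀ c : ι → O, algebraMap O K (eval c N) = Algebra.norm K (∑ i, c i • v i))
    (i : ι) (t : O) :
    eval (Pi.single i t) N = t ^ finrank K L * eval (Pi.single i 1) N := by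
  apply FaithfulSMul.algebraMap_injective O K
  have hsum (s : O) :
      ∑ j, (Pi.single i s : ι → O) j • v j = algebraMap K L (algebraMap O K s) * v i := by
    rw [Fintype.sum_eq_single i fun j hj => by rw [Pi.single_eq_of_ne hj, zero_smul],
      Pi.single_eq_same, ← IsScalarTower.algebraMap_apply, Algebra.smul_def]
  simp only [map_mul, map_pow, hN, hsum, Algebra.norm_algebraMap, map_one, one_mul]

end NormForm

theorem stmt17_general (O : Type) [CommRing O] [IsDomain O] [IsDiscreteValuationRing O]
    (K : Type) [Field K] [Algebra O K] [IsFractionRing O K]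
    (L : Type) [Field L] [Algebra K L] [FiniteDimensional K L]
    [Algebra O L] [IsScalarTower O K L]
    (d : ℕ) (b : Module.Basis (Fin d) O (integralClosure O L))
    (N : MvPolynomial (Fin d) O)
    (hN : ∀ c : Fin d → O,
      algebraMap O K (MvPolynomial.eval c N) = Algebra.norm K (∑ i, c i • (b i : L)))
    (z₀ : Fin d → O)
    (hz : MvPolynomial.eval z₀ N = 0)
    (hsm : ∃ i, IsLocalRing.residue O (MvPolynomial.eval z₀ (MvPolynomial.pderiv i N)) ≠ 0) :
    Module.finrank K L = 1 := by
  obtain ⟨i, hi⟩ := hsm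
  have hv : LinearIndependent O fun j => (b j : L) :=
    b.linearIndependent.map' (integralClosure O L).val.toLinearMap
      (LinearMap.ker_eq_bot.mpr Subtype.val_injective)
  obtain rfl := eq_zero_of_eval_normForm_eq_zero hv hN hz
  have := IsDiscreteValuationRing.infinite O
  by_contra hn
  apply hi
  rw [eval_zero_pderiv_eq_zero_of_eval_piSingle hn (eval_piSingle_normForm hN i), map_zero]

/-- Let `k_v` be a nonarchimedean local field with ring of integers `O` (a complete DVR
with finite residue field) and let `L/k_v` be an unramified finite extension (the maximal
ideal of `O` generates the maximal ideal of the ring of integers of `L`). Express the norm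
form `N_{L/k_v}` in an integral basis as a polynomial `N` over `O`. If the equation
`N_{L/k_v}(z) = 0` has a solution `z₀` with coordinates in `O` whose reduction modulo the
maximal ideal is a smooth point of the reduced hypersurface (some partial derivative of `N`
is a unit at `z₀`), then `L` has a degree-`1` factor over `k_v`; as `L` is a field this
means `L = k_v`, i.e. `[L : k_v] = 1`. -/
theorem stmt17 (O : Type) [CommRing O] [IsDomain O] [IsDiscreteValuationRing O]
    [IsAdicComplete (IsLocalRing.maximalIdeal O) O] [Finite (IsLocalRing.ResidueField O)]
    (K : Type) [Field K] [Algebra O K] [IsFractionRing O K]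
    (L : Type) [Field L] [Algebra K L] [FiniteDimensional K L]
    [Algebra O L] [IsScalarTower O K L]
    (hunr : ((IsLocalRing.maximalIdeal O).map
      (algebraMap O (integralClosure O L))).IsMaximal)
    (d : ℕ) (b : Module.Basis (Fin d) O (integralClosure O L))
    (N : MvPolynomial (Fin d) O)
    (hN : ∀ c : Fin d → O,
      algebraMap O K (MvPolynomial.eval c N) = Algebra.norm K (∑ i, c i • (b i : L)))
    (z₀ : Fin d → O)
    (hz : MvPolynomial.eval z₀ N = 0)
    (hsm : ∃ i, IsLocalRing.residue O (MvPolynomial.eval z₀ (MvPolynomial.pderiv i N)) ≠ 0) :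
    Module.finrank K L = 1 :=
  stmt17_general O K L d b N hN z₀ hz hsm
end
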